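/- arXiv:1511.05912 — 2 statements merged into one kernel-verified Lean document; each statement's English description precedes it below -/
import Mathlib

section
/- (Criterion for G-convergence of positive definite self-adjoint operators) Let λ > 0, let A_h be a sequence in P_λ(Y), and let P_h be the orthogonal projection of Y onto the closure of the domain of A_h. If for every u ∈ Y the sequence A_h^{-1}P_h u converges in Y, then there exists an operator A ∈ P_λ(Y) such that A_h G-converges to A in Y. -/
open Filter Topology
open scoped InnerProductSpace RealInnerProductSpace ENNReal

noncomputable section

variable (Y : Type*) [NormedAddCommGroup Y] [InnerProductSpace ℝ Y] [CompleteSpace Y]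

/-- The class `P_lam(Y)`: self-adjoint operators `A` defined on a linear
subspace of `Y`, regarded as operators on the closed subspace
`V = closure(D(A))`, satisfying `⟨Au, u⟩ ≥ lam ‖u‖²` on `D(A)`.
Self-adjointness of the symmetric semibounded operator is encoded by
surjectivity of `A + μI : D(A) → V` for every `μ > 0`. -/
structure POp (lam : ℝ) where
  dom : Submodule ℝ Y
  op : dom →ₗ[ℝ] Y
  mem_closure : ∀ u : dom, op u ∈ dom.topologicalClosure
  symmetric : ∀ u v : dom, ⟪op u, (v : Y)⟫ = ⟪(u : Y), op v⟫
  coercive : ∀ u : dom, lam * ‖(u : Y)‖ ^ 2 ≤ ⟪op u, (u : Y)⟫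
  selfadj : ∀ μ : ℝ, 0 < μ → ∀ v ∈ dom.topologicalClosure,
    ∃ u : dom, op u + μ • (u : Y) = v

variable {Y}

/-- The orthogonal projection of `Y` onto the closure of a subspace. -/
def projClosure (K : Submodule ℝ Y) (u : Y) : Y :=
  haveI : CompleteSpace K.topologicalClosure :=
    K.isClosed_topologicalClosure.completeSpace_coe
  (K.topologicalClosure.orthogonalProjection u : Y)

/-- `x` solves `(A + μ I) x = P u`, where `P` is the orthogonal projection onto
the closure of the domain of `A`. -/
def SolvesShifted {lam : ℝ} (A : POp Y lam) (μ : ℝ) (x : Y) (u : Y) : Prop :=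
  ∃ hx : x ∈ A.dom, A.op ⟨x, hx⟩ + μ • x = projClosure A.dom u

/-- G-convergence of `(A_h + μI)` to `(A + μI)`: for every `u ∈ Y`,
`(A_h + μ)⁻¹ P_h u → (A + μ)⁻¹ P u` in `Y` (the inverses applied to the
projections, expressed through the — unique — solutions of the corresponding
equations). With `μ = 0` this is the G-convergence `A_h → A` of Definition 4,
and quantifying over all `μ > 0` gives strong resolvent convergence. -/
def GConvShift {lam : ℝ} (μ : ℝ) (A : ℕ → POp Y lam) (B : POp Y lam) : Prop :=
  ∀ u : Y, ∀ x : ℕ → Y, ∀ y : Y,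
    (∀ h, SolvesShifted (A h) μ (x h) u) → SolvesShifted B μ y u →
      Tendsto x atTop (𝓝 y)

/-- G-convergence `A_h → A` in `P_lam(Y)`, `lam > 0`. -/
def GConvOp {lam : ℝ} (A : ℕ → POp Y lam) (B : POp Y lam) : Prop :=
  GConvShift 0 A B

/-- Convergence in the strong resolvent sense for operators of class `P₀(Y)`. -/
def SRSConv (A : ℕ → POp Y 0) (B : POp Y 0) : Prop :=
  ∀ μ : ℝ, 0 < μ → GConvShift μ A B



/-!
For `A ∈ P_λ(Y)` with `λ > 0` the equation `A x = P u` has a unique solution for every `u`: it is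
the fixed point of the contraction `x ↦ (A + 1)⁻¹ P (u + x)`, of constant `1 / (λ + 1)`. So each
`A_h⁻¹ P_h` is an everywhere defined linear operator, symmetric and satisfying
`λ ‖S u‖² ≤ ⟪S u, u⟫`; both properties pass to the pointwise limit `T`. Such a `T` is `B⁻¹ P` for
the operator `B : T a ↦ P a` on `range T`, which lies in `P_λ(Y)`: surjectivity of `B + μ` is
surjectivity of `1 + μ T`, given by the Lax–Milgram theorem.
-/

theorem projClosure_eq_starProjection (K : Submodule ℝ Y) :
    projClosure K = K.topologicalClosure.starProjection := rfl

theorem projClosure_add (K : Submodule ℝ Y) (u v : Y) :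
    projClosure K (u + v) = projClosure K u + projClosure K v :=
  map_add K.topologicalClosure.starProjection u v

theorem projClosure_smul (K : Submodule ℝ Y) (c : ℝ) (u : Y) :
    projClosure K (c • u) = c • projClosure K u :=
  map_smul K.topologicalClosure.starProjection c u

theorem projClosure_of_mem {K : Submodule ℝ Y} {x : Y} (hx : x ∈ K) : projClosure K x = x :=
  Submodule.starProjection_eq_self_iff.2 (K.le_topologicalClosure hx)

theorem inner_projClosure_of_mem {K : Submodule ℝ Y} {u x : Y} (hx : x ∈ K) :
    ⟪projClosure K u, x⟫ = ⟪u, x⟫ := by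
  rw [projClosure_eq_starProjection, Submodule.inner_starProjection_left_eq_right,
    ← projClosure_eq_starProjection, projClosure_of_mem hx]

namespace SolvesShifted

variable {lam μ : ℝ} {A : POp Y lam} {x x' u u' : Y}

theorem add (h : SolvesShifted A μ x u) (h' : SolvesShifted A μ x' u') :
    SolvesShifted A μ (x + x') (u + u') := by
  obtain ⟨hx, e⟩ := h
  obtain ⟨hx', e'⟩ := h'
  refine ⟨A.dom.add_mem hx hx', ?_⟩
  have hop : A.op ⟨x + x', _⟩ = A.op ⟨x, hx⟩ + A.op ⟨x', hx'⟩ := A.op.map_add ⟨x, hx⟩ ⟨x', hx'⟩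
  rw [hop, projClosure_add, ← e, ← e', smul_add]
  abel

theorem smul (c : ℝ) (h : SolvesShifted A μ x u) : SolvesShifted A μ (c • x) (c • u) := by
  obtain ⟨hx, e⟩ := h
  refine ⟨A.dom.smul_mem c hx, ?_⟩
  have hop : A.op ⟨c • x, _⟩ = c • A.op ⟨x, hx⟩ := A.op.map_smul c ⟨x, hx⟩
  rw [hop, projClosure_smul, ← e, smul_add, smul_comm c μ x]

theorem sub (h : SolvesShifted A μ x u) (h' : SolvesShifted A μ x' u') :
    SolvesShifted A μ (x - x') (u - u') := by
  simpa only [neg_one_smul, ← sub_eq_add_neg] using h.add (h'.smul (-1))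

theorem inner_comm (h : SolvesShifted A μ x u) (h' : SolvesShifted A μ x' u') :
    ⟪x, u'⟫ = ⟪u, x'⟫ := by
  obtain ⟨hx, e⟩ := h
  obtain ⟨hx', e'⟩ := h'
  calc ⟪x, u'⟫ = ⟪projClosure A.dom u', x⟫ := by
        rw [inner_projClosure_of_mem hx, real_inner_comm]
    _ = ⟪projClosure A.dom u, x'⟫ := by
        have hsymm : ⟪A.op ⟨x', hx'⟩, x⟫ = ⟪x', A.op ⟨x, hx⟩⟫ := A.symmetric ⟨x', hx'⟩ ⟨x, hx⟩
        rw [← e, ← e', inner_add_left, inner_add_left, hsymm, real_inner_smul_left,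
          real_inner_smul_left, real_inner_comm x x', real_inner_comm (A.op _) x']
    _ = ⟪u, x'⟫ := inner_projClosure_of_mem hx'

theorem coercive (h : SolvesShifted A μ x u) : (lam + μ) * ‖x‖ ^ 2 ≤ ⟪x, u⟫ := by
  obtain ⟨hx, e⟩ := h
  have hA := A.coercive ⟨x, hx⟩
  rw [real_inner_comm, ← inner_projClosure_of_mem hx, ← e, inner_add_left,
    real_inner_smul_left, real_inner_self_eq_norm_sq]
  linarith

theorem norm_le (h : SolvesShifted A μ x u) : (lam + μ) * ‖x‖ ≤ ‖u‖ := by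
  have h₁ := h.coercive
  have h₂ := real_inner_le_norm x u
  rcases (norm_nonneg x).eq_or_lt with h₀ | h₀
  · rw [← h₀]; simp
  · nlinarith

theorem unique (hpos : 0 < lam + μ) (h : SolvesShifted A μ x u) (h' : SolvesShifted A μ x' u) :
    x = x' := by
  have := (h.sub h').coercive
  rw [sub_self, inner_zero_right] at this
  have : ‖x - x'‖ ^ 2 ≤ 0 := by nlinarith
  simpa [sub_eq_zero] using this

theorem of_add_smul {ν : ℝ} (h : SolvesShifted A (μ + ν) x (u + ν • x)) :
    SolvesShifted A μ x u := by
  obtain ⟨hx, e⟩ := h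
  refine ⟨hx, ?_⟩
  rw [projClosure_add, projClosure_smul, projClosure_of_mem hx, add_smul, ← add_assoc] at e
  exact add_right_cancel e

end SolvesShifted

namespace POp

variable {lam μ : ℝ} (A : POp Y lam)

theorem exists_solvesShifted_of_pos (hμ : 0 < μ) (u : Y) : ∃ x, SolvesShifted A μ x u := by
  obtain ⟨x, hx⟩ := A.selfadj μ hμ _ (Submodule.starProjection_apply_mem _ u)
  exact ⟨x, x.2, hx⟩

theorem exists_solvesShifted_zero (hlam : 0 < lam) (u : Y) : ∃ x, SolvesShifted A 0 x u := by
  choose R hR using A.exists_solvesShifted_of_pos one_pos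
  have hcontr : ContractingWith (lam + 1)⁻¹.toNNReal (fun x => R (u + x)) := by
    refine ⟨?_, LipschitzWith.of_dist_le_mul fun x y => ?_⟩
    · exact Real.toNNReal_lt_one.2 (inv_lt_one_of_one_lt₀ (by linarith))
    · have h := ((hR (u + x)).sub (hR (u + y))).norm_le
      rw [add_sub_add_left_eq_sub] at h
      rw [dist_eq_norm, dist_eq_norm, Real.coe_toNNReal _ (by positivity), inv_mul_eq_div,
        le_div_iff₀ (by linarith)]
      linarith
  set x := ContractingWith.fixedPoint _ hcontr
  have hfix : R (u + x) = x := hcontr.fixedPoint_isFixedPt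
  refine ⟨x, SolvesShifted.of_add_smul (ν := 1) ?_⟩
  rw [zero_add, one_smul]
  simpa only [hfix] using hR (u + x)

variable (hlam : 0 < lam)

def invProj : Y →ₗ[ℝ] Y where
  toFun u := (A.exists_solvesShifted_zero hlam u).choose
  map_add' u v := (A.exists_solvesShifted_zero hlam (u + v)).choose_spec.unique (by linarith)
    ((A.exists_solvesShifted_zero hlam u).choose_spec.add
      (A.exists_solvesShifted_zero hlam v).choose_spec)
  map_smul' c u := (A.exists_solvesShifted_zero hlam (c • u)).choose_spec.unique (by linarith)
    ((A.exists_solvesShifted_zero hlam u).choose_spec.smul c)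

theorem solvesShifted_invProj (u : Y) : SolvesShifted A 0 (A.invProj hlam u) u :=
  (A.exists_solvesShifted_zero hlam u).choose_spec

theorem isSymmetric_invProj : (A.invProj hlam).IsSymmetric := fun u v =>
  (A.solvesShifted_invProj hlam u).inner_comm (A.solvesShifted_invProj hlam v)

theorem coercive_invProj (u : Y) : lam * ‖A.invProj hlam u‖ ^ 2 ≤ ⟪A.invProj hlam u, u⟫ := by
  simpa only [add_zero] using (A.solvesShifted_invProj hlam u).coercive

end POp

theorem LinearMap.IsSymmetric.of_tendsto {𝕜 E ι : Type*} [RCLike 𝕜] [NormedAddCommGroup E]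
    [InnerProductSpace 𝕜 E] {l : Filter ι} [l.NeBot] {S : ι → E →ₗ[𝕜] E} {T : E →ₗ[𝕜] E}
    (hS : ∀ i, (S i).IsSymmetric) (hST : ∀ u, Tendsto (fun i => S i u) l (𝓝 (T u))) :
    T.IsSymmetric := fun u v =>
  tendsto_nhds_unique (((hST u).inner tendsto_const_nhds).congr fun i => hS i u v)
    (tendsto_const_nhds.inner (hST v))

theorem ContinuousLinearMap.surjective_id_add_of_inner_nonneg {E : Type*} [NormedAddCommGroup E]
    [InnerProductSpace ℝ E] [CompleteSpace E] (T : E →L[ℝ] E) (hT : ∀ u, 0 ≤ ⟪T u, u⟫) :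
    Function.Surjective (ContinuousLinearMap.id ℝ E + T) := by
  have hcoer : IsCoercive ((innerSL ℝ).comp (ContinuousLinearMap.id ℝ E + T)) :=
    ⟨1, one_pos, fun u => by
      simp only [comp_apply, add_apply, coe_id', id_eq, innerSL_apply_apply, inner_add_left,
        real_inner_self_eq_norm_mul_norm, one_mul]
      linarith [hT u]⟩
  intro v
  refine ⟨hcoer.continuousLinearEquivOfBilin.symm v, ext_inner_right ℝ fun w => ?_⟩
  conv_rhs => rw [← hcoer.continuousLinearEquivOfBilin.apply_symm_apply v]
  rw [hcoer.continuousLinearEquivOfBilin_apply]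
  rfl

namespace POp

variable {lam : ℝ} (T : Y →ₗ[ℝ] Y) (hT : T.IsSymmetric)

/-- The operator `T a ↦ P a` on `range T`, `P` the orthogonal projection onto its closure;
it is well defined because `ker T ⊥ range T`. -/
def ofSymmetricOp : LinearMap.range T →ₗ[ℝ] Y :=
  (LinearMap.ker T).liftQ ((LinearMap.range T).topologicalClosure.starProjection : Y →ₗ[ℝ] Y)
    (by rw [← hT.orthogonal_range, ← Submodule.orthogonal_closure, ← Submodule.ker_starProjection])
    ∘ₗ T.quotKerEquivRange.symm

theorem ofSymmetricOp_apply (x : LinearMap.range T) {a : Y} (ha : T a = x) :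
    ofSymmetricOp T hT x = projClosure (LinearMap.range T) a := by
  obtain rfl : x = ⟨T a, T.mem_range_self a⟩ := Subtype.ext ha.symm
  rw [ofSymmetricOp, LinearMap.comp_apply, LinearEquiv.coe_coe,
    LinearMap.quotKerEquivRange_symm_apply_image, Submodule.mkQ_apply, Submodule.liftQ_apply]
  rfl

def ofSymmetric (hlam : 0 ≤ lam) (hcoer : ∀ u, lam * ‖T u‖ ^ 2 ≤ ⟪T u, u⟫) : POp Y lam where
  dom := LinearMap.range T
  op := ofSymmetricOp T hT
  mem_closure x := by
    obtain ⟨a, ha⟩ := x.2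
    rw [ofSymmetricOp_apply T hT x ha]
    exact Submodule.starProjection_apply_mem _ a
  symmetric x y := by
    obtain ⟨a, ha⟩ := x.2
    obtain ⟨b, hb⟩ := y.2
    rw [ofSymmetricOp_apply T hT x ha, ofSymmetricOp_apply T hT y hb,
      inner_projClosure_of_mem y.2, real_inner_comm (projClosure _ b),
      inner_projClosure_of_mem x.2, ← ha, ← hb, ← hT, real_inner_comm]
  coercive x := by
    obtain ⟨a, ha⟩ := x.2
    rw [ofSymmetricOp_apply T hT x ha, inner_projClosure_of_mem x.2, ← ha, real_inner_comm]
    exact hcoer a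
  selfadj μ hμ v hv := by
    have hnonneg (u : Y) : 0 ≤ ⟪(μ • ⟨T, hT.continuous⟩ : Y →L[ℝ] Y) u, u⟫ := by
      rw [smul_apply, real_inner_smul_left]
      exact mul_nonneg hμ.le ((by positivity : 0 ≤ lam * ‖T u‖ ^ 2).trans (hcoer u))
    obtain ⟨a, ha⟩ := ContinuousLinearMap.surjective_id_add_of_inner_nonneg _ hnonneg v
    replace ha : a + μ • T a = v := ha
    refine ⟨⟨T a, T.mem_range_self a⟩, ?_⟩
    rw [ofSymmetricOp_apply T hT _ rfl]
    calc projClosure (LinearMap.range T) a + μ • T a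
        = projClosure (LinearMap.range T) (a + μ • T a) := by
          rw [projClosure_add, projClosure_smul, projClosure_of_mem (T.mem_range_self a)]
      _ = v := by
          rw [ha]
          exact Submodule.starProjection_eq_self_iff.2 hv

theorem solvesShifted_ofSymmetric (hlam : 0 ≤ lam) (hcoer : ∀ u, lam * ‖T u‖ ^ 2 ≤ ⟪T u, u⟫)
    (u : Y) : SolvesShifted (ofSymmetric T hT hlam hcoer) 0 (T u) u :=
  ⟨T.mem_range_self u, by rw [zero_smul, add_zero]; exact ofSymmetricOp_apply T hT _ rfl⟩

end POp

/-- **Criterion for G-convergence** (Lemma 1): if `lam > 0`, `A_h ∈ P_lam(Y)`,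
and for every `u ∈ Y` the sequence `A_h⁻¹ P_h u` converges in `Y` (where `P_h`
is the orthogonal projection onto the closure of the domain of `A_h`), then
there exists `A ∈ P_lam(Y)` such that `A_h` G-converges to `A` in `Y`. -/
theorem g_convergence_criterion {Y : Type*} [NormedAddCommGroup Y]
    [InnerProductSpace ℝ Y] [CompleteSpace Y]
    (lam : ℝ) (hlam : 0 < lam) (A : ℕ → POp Y lam)
    (hconv : ∀ u : Y, ∀ x : ℕ → Y,
      (∀ h, SolvesShifted (A h) 0 (x h) u) → ∃ L : Y, Tendsto x atTop (𝓝 L)) :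
    ∃ B : POp Y lam, GConvOp A B := by
  choose L hL using fun u => hconv u _ fun h => (A h).solvesShifted_invProj hlam u
  let T := linearMapOfTendsto L (fun h => (A h).invProj hlam) (tendsto_pi_nhds.2 hL)
  have hT : ∀ u, Tendsto (fun h => (A h).invProj hlam u) atTop (𝓝 (T u)) := hL
  have hTsymm : T.IsSymmetric :=
    .of_tendsto (fun h => (A h).isSymmetric_invProj hlam) hT
  have hTcoer (u : Y) : lam * ‖T u‖ ^ 2 ≤ ⟪T u, u⟫ :=
    le_of_tendsto_of_tendsto' (((hT u).norm.pow 2).const_mul lam)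
      ((hT u).inner tendsto_const_nhds) fun h => (A h).coercive_invProj hlam u
  refine ⟨POp.ofSymmetric T hTsymm hlam.le hTcoer, fun u x y hx hy => ?_⟩
  have hpos : 0 < lam + 0 := by rwa [add_zero]
  obtain rfl : x = fun h => (A h).invProj hlam u :=
    funext fun h => (hx h).unique hpos ((A h).solvesShifted_invProj hlam u)
  obtain rfl : y = T u := hy.unique hpos (POp.solvesShifted_ofSymmetric T hTsymm hlam.le hTcoer u)
  exact hT u
end
end

section
/- (Γ-limits of equi-bounded convex functions are pointwise limits) Let Y be a normed vector space and let F_h be a sequence of convex functions on Y. Suppose F_h is equi-bounded in a neighborhood of u ∈ Y, i.e., there exist U ∈ N(u) and a constant C such that |F_h(v)| ≤ C for every v ∈ U and all h. Then the Γ-lower limit of F_h at u equals liminf_{h→∞} F_h(u) and the Γ-upper limit of F_h at u equals limsup_{h→∞} F_h(u). -/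
/-!
Convex functions bounded by `C` on `ball u r` are Lipschitz on `ball u (r / 2)` with the common
constant `4 C / r`, so the `F h` are equicontinuous at `u`. Hence, uniformly in `h`, the infimum
of `F h` over a small enough ball around `u` is within `δ` of `F h u`, which bounds the Γ-limits
from below by `liminf F h u` and `limsup F h u`; the reverse inequalities hold because `u` lies in
every neighbourhood.
-/

open Filter Topology

noncomputable section

/-- The Γ-lower limit `F^i(u) = sup_{U ∈ N(u)} liminf_h inf_{v ∈ U} F_h(v)`
of a sequence of (extended-real-valued, here real-valued) functionals, where
`N(u)` is the family of open neighborhoods of `u`. -/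
def GammaLiminf {Y : Type*} [TopologicalSpace Y] (F : ℕ → Y → ℝ) (u : Y) : EReal :=
  ⨆ U ∈ {U : Set Y | IsOpen U ∧ u ∈ U},
    Filter.liminf (fun h => ⨅ v ∈ U, (F h v : EReal)) Filter.atTop

/-- The Γ-upper limit `F^s(u) = sup_{U ∈ N(u)} limsup_h inf_{v ∈ U} F_h(v)`. -/
def GammaLimsup {Y : Type*} [TopologicalSpace Y] (F : ℕ → Y → ℝ) (u : Y) : EReal :=
  ⨆ U ∈ {U : Set Y | IsOpen U ∧ u ∈ U},
    Filter.limsup (fun h => ⨅ v ∈ U, (F h v : EReal)) Filter.atTop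

theorem equicontinuousAt_of_lipschitzOnWith {ι X Z : Type*} [PseudoMetricSpace X]
    [PseudoMetricSpace Z] {F : ι → X → Z} {K : NNReal} {s : Set X} {x : X} (hs : s ∈ 𝓝 x)
    (hF : ∀ i, LipschitzOnWith K (F i) s) : EquicontinuousAt F x := by
  have hK : Tendsto (fun y => (K : ℝ) * dist x y) (𝓝 x) (𝓝 0) := by
    simpa using ((tendsto_const_nhds (x := x)).dist (tendsto_id (x := 𝓝 x))).const_mul (K : ℝ)
  refine Metric.equicontinuousAt_iff_right.2 fun ε hε => ?_
  filter_upwards [hs, hK.eventually (gt_mem_nhds hε)] with y hy hKy i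
  exact ((hF i).dist_le_mul x (mem_of_mem_nhds hs) y hy).trans_lt hKy

theorem equicontinuousAt_of_convexOn_ball {ι E : Type*} [NormedAddCommGroup E]
    [NormedSpace ℝ E] {F : ι → E → ℝ} {u : E} {r C : ℝ} (hr : 0 < r)
    (hconv : ∀ i, ConvexOn ℝ (Metric.ball u r) (F i))
    (hbdd : ∀ i, ∀ v ∈ Metric.ball u r, |F i v| ≤ C) : EquicontinuousAt F u := by
  refine equicontinuousAt_of_lipschitzOnWith (K := (2 * C / (r / 2)).toNNReal)
    (Metric.ball_mem_nhds u (half_pos hr)) fun i => ?_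
  simpa only [sub_half] using
    (hconv i).lipschitzOnWith_of_abs_le (half_pos hr) fun v hv => hbdd i v hv

def EquiLowerSemicontinuousAt {ι Y : Type*} [TopologicalSpace Y] (F : ι → Y → ℝ) (u : Y) :
    Prop :=
  ∀ δ > 0, ∀ᶠ v in 𝓝 u, ∀ i, F i u - δ < F i v

theorem EquicontinuousAt.equiLowerSemicontinuousAt {ι Y : Type*} [TopologicalSpace Y]
    {F : ι → Y → ℝ} {u : Y} (hF : EquicontinuousAt F u) : EquiLowerSemicontinuousAt F u :=
  fun δ hδ => (Metric.equicontinuousAt_iff_right.1 hF δ hδ).mono fun v hv i => by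
    linarith [(abs_lt.1 (Real.dist_eq (F i u) (F i v) ▸ hv i)).2]

section GammaLimits

variable {Y : Type*} [TopologicalSpace Y] {F : ℕ → Y → ℝ} {u : Y}

theorem gammaLiminf_le_liminf :
    GammaLiminf F u ≤ liminf (fun h => (F h u : EReal)) atTop :=
  iSup₂_le fun _ hV => liminf_le_liminf (Eventually.of_forall fun _ => iInf₂_le u hV.2)

theorem gammaLimsup_le_limsup :
    GammaLimsup F u ≤ limsup (fun h => (F h u : EReal)) atTop :=
  iSup₂_le fun _ hV => limsup_le_limsup (Eventually.of_forall fun _ => iInf₂_le u hV.2)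

namespace EquiLowerSemicontinuousAt

theorem exists_isOpen_le_iInf (hF : EquiLowerSemicontinuousAt F u) {z w : ℝ} (hzw : z < w) :
    ∃ V, IsOpen V ∧ u ∈ V ∧
      ∀ h, (w : EReal) < F h u → (z : EReal) ≤ ⨅ v ∈ V, (F h v : EReal) := by
  obtain ⟨V, hVF, hV, huV⟩ := mem_nhds_iff.1 (hF (w - z) (sub_pos.2 hzw))
  refine ⟨V, hV, huV, fun h hw => le_iInf₂ fun v hv => EReal.coe_le_coe_iff.2 ?_⟩
  linarith [hVF hv h, EReal.coe_lt_coe_iff.1 hw]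

theorem liminf_le_gammaLiminf (hF : EquiLowerSemicontinuousAt F u) :
    liminf (fun h => (F h u : EReal)) atTop ≤ GammaLiminf F u := by
  refine EReal.ge_of_forall_gt_iff_ge.1 fun z hz => ?_
  obtain ⟨w, hzw, hw⟩ := EReal.exists_between_coe_real hz
  obtain ⟨V, hV, huV, hVinf⟩ := hF.exists_isOpen_le_iInf (EReal.coe_lt_coe_iff.1 hzw)
  calc (z : EReal) ≤ liminf (fun h => ⨅ v ∈ V, (F h v : EReal)) atTop :=
        le_liminf_of_le (by isBoundedDefault) ((eventually_lt_of_lt_liminf hw).mono hVinf)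
    _ ≤ GammaLiminf F u :=
        le_biSup (fun V => liminf (fun h => ⨅ v ∈ V, (F h v : EReal)) atTop) ⟨hV, huV⟩

theorem limsup_le_gammaLimsup (hF : EquiLowerSemicontinuousAt F u) :
    limsup (fun h => (F h u : EReal)) atTop ≤ GammaLimsup F u := by
  refine EReal.ge_of_forall_gt_iff_ge.1 fun z hz => ?_
  obtain ⟨w, hzw, hw⟩ := EReal.exists_between_coe_real hz
  obtain ⟨V, hV, huV, hVinf⟩ := hF.exists_isOpen_le_iInf (EReal.coe_lt_coe_iff.1 hzw)
  calc (z : EReal) ≤ limsup (fun h => ⨅ v ∈ V, (F h v : EReal)) atTop :=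
        le_limsup_of_frequently_le ((frequently_lt_of_lt_limsup (by isBoundedDefault) hw).mono
          hVinf)
    _ ≤ GammaLimsup F u :=
        le_biSup (fun V => limsup (fun h => ⨅ v ∈ V, (F h v : EReal)) atTop) ⟨hV, huV⟩

end EquiLowerSemicontinuousAt

end GammaLimits

/-- **Γ-limits of equi-bounded convex functions are pointwise limits**
(Lemma 4): if `Y` is a normed vector space, `F_h` a sequence of convex
functions on `Y` which is equi-bounded in a neighborhood of `u`, then the
Γ-lower and Γ-upper limits of `F_h` at `u` are `liminf_h F_h(u)` and
`limsup_h F_h(u)` respectively. -/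
theorem gamma_limits_of_equibounded_convex
    {Y : Type*} [NormedAddCommGroup Y] [NormedSpace ℝ Y]
    (F : ℕ → Y → ℝ) (hconv : ∀ h, ConvexOn ℝ Set.univ (F h))
    (u : Y)
    (hequibdd : ∃ U : Set Y, IsOpen U ∧ u ∈ U ∧ ∃ C : ℝ,
      ∀ h, ∀ v ∈ U, |F h v| ≤ C) :
    GammaLiminf F u = Filter.liminf (fun h => (F h u : EReal)) Filter.atTop ∧
    GammaLimsup F u = Filter.limsup (fun h => (F h u : EReal)) Filter.atTop := by
  obtain ⟨U, hU, huU, C, hC⟩ := hequibdd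
  obtain ⟨r, hr, hrU⟩ := Metric.isOpen_iff.1 hU u huU
  have hF : EquiLowerSemicontinuousAt F u :=
    (equicontinuousAt_of_convexOn_ball hr
      (fun h => (hconv h).subset (Set.subset_univ _) (convex_ball u r))
      (fun h v hv => hC h v (hrU hv))).equiLowerSemicontinuousAt
  exact ⟨le_antisymm gammaLiminf_le_liminf hF.liminf_le_gammaLiminf,
    le_antisymm gammaLimsup_le_limsup hF.limsup_le_gammaLimsup⟩

end
end
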